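/- Every horn inclusion Λⁿ_0 ⊆ Δⁿ in (sSet)/(A×B) whose structure map (f,g) : Δⁿ → A × B satisfies that g|Δ^{\{0,1\}} is a degenerate edge of B is a retract, in the category of arrows of (sSet)/(A×B), of a map of the form Δ¹ × K ∪ \{0\} × L → Δ¹ × L (for a monomorphism K ↪ L) whose structure map sends Δ¹ × \{v\} to a degenerate edge of B for every vertex v of L. -/

import Mathlib

universe u

open CategoryTheory Limits Simplicial SSet

namespace Paper

/-- A morphism `f` is a retract of a morphism `g` in the arrow category. -/
def RetractOfArrow {C : Type*} [Category C] {A B X Y : C} (f : A ⟶ B) (g : X ⟶ Y) : Prop :=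
  ∃ (i : A ⟶ X) (r : X ⟶ A) (i' : B ⟶ Y) (r' : Y ⟶ B),
    i ≫ r = 𝟙 A ∧ i' ≫ r' = 𝟙 B ∧ i ≫ g = f ≫ i' ∧ g ≫ r' = r ≫ f

/-- A class of morphisms is stable under retracts. -/
def StableUnderRetracts {C : Type*} [Category C] (P : MorphismProperty C) : Prop :=
  ∀ ⦃A B X Y : C⦄ (f : A ⟶ B) (g : X ⟶ Y), RetractOfArrow f g → P g → P f

/-- The cocone at stage `j` of a transfinite sequence, whose colimit condition expresses
continuity of the sequence at `j`. -/
@[simps]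
def coconeAt {C : Type*} [Category C] {J : Type} [Preorder J] (F : J ⥤ C) (j : J) :
    Cocone (ObjectProperty.ι (fun i : J => i < j) ⋙ F) where
  pt := F.obj j
  ι :=
    { app := fun i => F.map (homOfLE i.2.le)
      naturality := fun a b f => by
        dsimp
        rw [Category.comp_id, ← F.map_comp]
        exact congrArg F.map (Subsingleton.elim _ _) }

/-- A class of morphisms is stable under transfinite composition. -/
def StableUnderTransfiniteComposition {C : Type*} [Category C] (P : MorphismProperty C) :
    Prop :=
  ∀ (J : Type) (_ : LinearOrder J) (_ : SuccOrder J) (_ : OrderBot J) (_ : WellFoundedLT J)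
    (F : J ⥤ C) (c : Cocone F) (_ : IsColimit c),
    (∀ j : J, ¬IsMax j → P (F.map (homOfLE (Order.le_succ j)))) →
    (∀ j : J, Order.IsSuccLimit j → Nonempty (IsColimit (coconeAt F j))) →
    P (c.ι.app ⊥)

/-- A weakly saturated class of morphisms: closed under pushouts (cobase change),
retracts, and transfinite composition. -/
def WeaklySaturated {C : Type*} [Category C] (P : MorphismProperty C) : Prop :=
  P.IsStableUnderCobaseChange ∧ StableUnderRetracts P ∧ StableUnderTransfiniteComposition P

/-- The weakly saturated class generated by a class of morphisms: the smallest weakly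
saturated class containing it. -/
def SaturationOf {C : Type*} [Category C] (S : MorphismProperty C) : MorphismProperty C :=
  fun _ _ f => ∀ (P : MorphismProperty C), WeaklySaturated P → S ≤ P → P f

/-- The generating left horn inclusions `Λ[n, i] ⟶ Δ[n]`, `0 ≤ i < n`. -/
inductive LeftHorns : (X Y : SSet) → (X ⟶ Y) → Prop where
  | mk (n : ℕ) (i : Fin (n + 1)) (h : (i : ℕ) < n) : LeftHorns _ _ (Λ[n, i].ι)

/-- The generating right horn inclusions `Λ[n, i] ⟶ Δ[n]`, `0 < i ≤ n`. -/
inductive RightHorns : (X Y : SSet) → (X ⟶ Y) → Prop where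
  | mk (n : ℕ) (i : Fin (n + 1)) (h : 0 < (i : ℕ)) : RightHorns _ _ (Λ[n, i].ι)

/-- The generating inner horn inclusions `Λ[n, i] ⟶ Δ[n]`, `0 < i < n`. -/
inductive InnerHorns : (X Y : SSet) → (X ⟶ Y) → Prop where
  | mk (n : ℕ) (i : Fin (n + 1)) (h0 : 0 < (i : ℕ)) (h1 : (i : ℕ) < n) :
      InnerHorns _ _ (Λ[n, i].ι)

/-- Left anodyne maps: the weakly saturated class generated by the horn inclusions
`Λ[n, i] ⟶ Δ[n]` with `0 ≤ i < n`. -/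
def LeftAnodyne : MorphismProperty SSet :=
  SaturationOf (fun X Y f => LeftHorns X Y f)

/-- Right anodyne maps: the weakly saturated class generated by the horn inclusions
`Λ[n, i] ⟶ Δ[n]` with `0 < i ≤ n`. -/
def RightAnodyne : MorphismProperty SSet :=
  SaturationOf (fun X Y f => RightHorns X Y f)

/-- Inner anodyne maps: the weakly saturated class generated by the inner horn inclusions
`Λ[n, i] ⟶ Δ[n]` with `0 < i < n`. -/
def InnerAnodyne : MorphismProperty SSet :=
  SaturationOf (fun X Y f => InnerHorns X Y f)

end Paper
noncomputable section

namespace Paper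

open CategoryTheory Limits Simplicial SSet MonoidalCategory CartesianMonoidalCategory

instance homToZeroSubsingleton (x : SimplexCategory) :
    Subsingleton (x ⟶ SimplexCategory.mk 0) :=
  ⟨fun f g => by
    ext i : 3
    apply Subsingleton.elim (α := Fin 1)⟩

instance ptSubsingleton (m : SimplexCategoryᵒᵖ) : Subsingleton (Δ[0].obj m) :=
  (stdSimplex.objEquiv (n := ⦋0⦌) (m := m)).subsingleton

/-- The unique map to the standard `0`-simplex. -/
def toPt (X : SSet) : X ⟶ Δ[0] where
  app m := TypeCat.ofHom (fun _ => stdSimplex.const 0 0 m)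
  naturality _ _ _ := by
    ext
    apply Subsingleton.elim

/-- The vertex `0` of `Δ[1]`, as a map `Δ[0] ⟶ Δ[1]`. -/
def pt0 : Δ[0] ⟶ Δ[1] := SSet.stdSimplex.map (SimplexCategory.const ⦋0⦌ ⦋1⦌ 0)

/-- The vertex `1` of `Δ[1]`, as a map `Δ[0] ⟶ Δ[1]`. -/
def pt1 : Δ[0] ⟶ Δ[1] := SSet.stdSimplex.map (SimplexCategory.const ⦋0⦌ ⦋1⦌ 1)

/-- An edge `Δ[1] ⟶ B` is degenerate if it factors through a vertex. -/
def DegenerateEdge {B : SSet} (e : Δ[1] ⟶ B) : Prop :=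
  ∃ v : Δ[0] ⟶ B, e = toPt Δ[1] ≫ v

/-- The edge `Δ^{0,1}` of `Δ[n]`, as a map `Δ[1] ⟶ Δ[n]` (for `n ≥ 1`). -/
def edge01 (n : ℕ) (hn : 1 ≤ n) : Δ[1] ⟶ Δ[n] :=
  (yonedaEquiv (X := Δ[n]) (n := ⦋1⦌)).symm
    (stdSimplex.edge n 0 ⟨1, by omega⟩ (by simp [Fin.le_def]))

/-- The edge `Δ^{n-1,n}` of `Δ[n]`, as a map `Δ[1] ⟶ Δ[n]` (for `n ≥ 1`). -/
def edgeLast (n : ℕ) (hn : 1 ≤ n) : Δ[1] ⟶ Δ[n] :=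
  (yonedaEquiv (X := Δ[n]) (n := ⦋1⦌)).symm
    (stdSimplex.edge n ⟨n - 1, by omega⟩ (Fin.last n) (by simp [Fin.le_def]))

/-- Inner fibrations: right lifting property against inner horn inclusions. -/
def InnerFibration {X Y : SSet} (p : X ⟶ Y) : Prop :=
  ∀ (n : ℕ) (i : Fin (n + 1)), 0 < (i : ℕ) → (i : ℕ) < n →
    HasLiftingProperty (Λ[n, i].ι) p

/-- Left fibrations: right lifting property against `Λ[n, i] ⟶ Δ[n]` for `0 ≤ i < n`. -/
def LeftFibration {X Y : SSet} (p : X ⟶ Y) : Prop :=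
  ∀ (n : ℕ) (i : Fin (n + 1)), (i : ℕ) < n → HasLiftingProperty (Λ[n, i].ι) p

/-- Kan fibrations: right lifting property against all horn inclusions. -/
def KanFibration {X Y : SSet} (p : X ⟶ Y) : Prop :=
  ∀ (n : ℕ), 1 ≤ n → ∀ (i : Fin (n + 1)), HasLiftingProperty (Λ[n, i].ι) p

/-- Trivial Kan fibrations: right lifting property against all boundary inclusions. -/
def TrivialKanFibration {X Y : SSet} (p : X ⟶ Y) : Prop :=
  ∀ (n : ℕ), HasLiftingProperty (∂Δ[n].ι) p

/-- Lurie's notion of a bifibration `X → A × B` (HTT, 2.4.7.2). -/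
structure IsBifibration {X A B : SSet} (pq : X ⟶ A ⊗ B) : Prop where
  inner : InnerFibration pq
  left : ∀ (n : ℕ) (hn : 1 ≤ n) (u : (Λ[n, 0] : SSet) ⟶ X) (v : Δ[n] ⟶ A ⊗ B),
    u ≫ pq = Λ[n, 0].ι ≫ v →
    DegenerateEdge (edge01 n hn ≫ v ≫ snd A B) →
    ∃ w : Δ[n] ⟶ X, Λ[n, 0].ι ≫ w = u ∧ w ≫ pq = v
  right : ∀ (n : ℕ) (hn : 1 ≤ n) (u : (Λ[n, Fin.last n] : SSet) ⟶ X) (v : Δ[n] ⟶ A ⊗ B),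
    u ≫ pq = Λ[n, Fin.last n].ι ≫ v →
    DegenerateEdge (edgeLast n hn ≫ v ≫ fst A B) →
    ∃ w : Δ[n] ⟶ X, Λ[n, Fin.last n].ι ≫ w = u ∧ w ≫ pq = v

/-- The pushout-product of two maps of simplicial sets. -/
def pushoutProd {A B X Y : SSet.{u_1}} (f : A ⟶ B) (g : X ⟶ Y) :
    pushout (f ▷ X) (A ◁ g) ⟶ B ⊗ Y :=
  pushout.desc (B ◁ g) (f ▷ Y) (whisker_exchange f g).symm

/-- The diagonal map `X ⟶ X × X`. -/
def diag (X : SSet) : X ⟶ X ⊗ X := lift (𝟙 X) (𝟙 X)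

end Paper
namespace Paper

open CategoryTheory Limits SSet MonoidalCategory CartesianMonoidalCategory Simplicial

noncomputable instance : MonoidalClosed SSet.{u} :=
  (inferInstance : MonoidalClosed (SimplexCategoryᵒᵖ ⥤ Type u))

variable (A B : SSet.{u})

/-- The generating bivariant anodyne maps in `(sSet)/(A × B)`. -/
inductive BivGen : (U V : Over (A ⊗ B)) → (U ⟶ V) → Prop where
  | inner (n : ℕ) (i : Fin (n + 1)) (h0 : 0 < (i : ℕ)) (h1 : (i : ℕ) < n)
      (v : Δ[n] ⟶ A ⊗ B) :
      BivGen (Over.mk (Λ[n, i].ι ≫ v)) (Over.mk v)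
        (Over.homMk (Λ[n, i].ι))
  /-- The generating left horn inclusions over `A × B`. -/
  | left (n : ℕ) (hn : 1 ≤ n) (v : Δ[n] ⟶ A ⊗ B)
      (hdeg : DegenerateEdge (edge01 n hn ≫ v ≫ snd A B)) :
      BivGen (Over.mk (Λ[n, 0].ι ≫ v)) (Over.mk v)
        (Over.homMk (Λ[n, 0].ι))
  /-- The generating right horn inclusions over `A × B`. -/
  | right (n : ℕ) (hn : 1 ≤ n) (v : Δ[n] ⟶ A ⊗ B)
      (hdeg : DegenerateEdge (edgeLast n hn ≫ v ≫ fst A B)) :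
      BivGen (Over.mk (Λ[n, Fin.last n].ι ≫ v)) (Over.mk v)
        (Over.homMk (Λ[n, Fin.last n].ι))

/-- Bivariant anodyne maps: the weakly saturated class generated by the
generating bivariant anodyne maps. -/
def BivAnodyne : MorphismProperty (Over (A ⊗ B)) :=
  SaturationOf (fun U V f => BivGen A B U V f)

variable {A B}

/-- A map in `(sSet)/(A × B)` is a bifibration if it has the right lifting property
against all bivariant anodyne maps. -/
def OverBifibration {U V : Over (A ⊗ B)} (f : U ⟶ V) : Prop :=
  ∀ ⦃P Q : Over (A ⊗ B)⦄ (g : P ⟶ Q), BivAnodyne A B g → HasLiftingProperty g f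

open MonoidalClosed

/-- The structure map of an object of `(sSet)/(A × B)`. -/
def sMap (X : Over (A ⊗ B)) : X.left ⟶ A ⊗ B := X.hom

lemma sMap_w {X Y : Over (A ⊗ B)} (f : X ⟶ Y) : f.left ≫ sMap Y = sMap X := Over.w f


/-- The simplicial mapping space `map_{A×B}(M, X)` for two objects of `(sSet)/(A × B)`:
the fiber of `X^M → (A×B)^M` over the vertex given by the structure map of `M`. -/
noncomputable def mapOver (M X : Over (A ⊗ B)) : SSet :=
  pullback ((ihom M.left).map (sMap X)) (curry (fst M.left Δ[0] ≫ sMap M))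

/-- Functoriality of `mapOver` in the second variable. -/
noncomputable def mapOverComp (M : Over (A ⊗ B)) {X Y : Over (A ⊗ B)} (p : X ⟶ Y) :
    mapOver M X ⟶ mapOver M Y :=
  pullback.map _ _ _ _ ((ihom M.left).map p.left) (𝟙 _) (𝟙 _)
    (by rw [Category.comp_id, ← Functor.map_comp, sMap_w p]) (by simp)

/-- Contravariant functoriality of `mapOver` in the first variable. -/
noncomputable def mapOverPre {K L : Over (A ⊗ B)} (u : K ⟶ L) (X : Over (A ⊗ B)) :
    mapOver L X ⟶ mapOver K X :=
  pullback.map _ _ _ _ ((MonoidalClosed.pre u.left).app X.left) (𝟙 _)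
    ((MonoidalClosed.pre u.left).app (A ⊗ B))
    ((MonoidalClosed.pre u.left).naturality (sMap X))
    (by
      rw [Category.id_comp]
      apply uncurry_injective
      rw [uncurry_natural_left, uncurry_curry,
        show MonoidalClosed.uncurry ((MonoidalClosed.pre u.left).app (A ⊗ B)) = _ from
          MonoidalClosed.uncurry_pre u.left (A ⊗ B),
        ← Category.assoc,
        whisker_exchange u.left (MonoidalClosed.curry (fst L.left Δ[0] ≫ sMap L)),
        Category.assoc]
      have h : L.left ◁ MonoidalClosed.curry (fst L.left Δ[0] ≫ sMap L) ≫
          (ihom.ev L.left).app (A ⊗ B) = fst L.left Δ[0] ≫ sMap L := by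
        rw [← uncurry_eq, uncurry_curry]
      rw [h, whiskerRight_fst_assoc, ← sMap_w u])

/-- The vertex of the mapping space `map_{A×B}(X, Y)` determined by a map `X ⟶ Y`
over `A × B`. -/
noncomputable def vertexOfHom {X Y : Over (A ⊗ B)} (f : X ⟶ Y) : Δ[0] ⟶ mapOver X Y :=
  pullback.lift (curry (fst X.left Δ[0] ≫ f.left)) (𝟙 Δ[0])
    (by rw [← curry_natural_right, Category.assoc, sMap_w f, Category.id_comp])

/-- A fiberwise homotopy between two maps `X ⟶ Y` over `A × B`: an edge of the
simplicial mapping space `map_{A×B}(X, Y)` joining them. -/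
def FiberwiseHomotopic {X Y : Over (A ⊗ B)} (f g : X ⟶ Y) : Prop :=
  ∃ H : Δ[1] ⟶ mapOver X Y, pt0 ≫ H = vertexOfHom f ∧ pt1 ≫ H = vertexOfHom g

/-- A fiberwise homotopy equivalence over `A × B`. -/
def FiberwiseHomotopyEquiv {X Y : Over (A ⊗ B)} (h : X ⟶ Y) : Prop :=
  ∃ k : Y ⟶ X, FiberwiseHomotopic (h ≫ k) (𝟙 X) ∧ FiberwiseHomotopic (k ≫ h) (𝟙 Y)

/-- The endpoint inclusion `X ⟶ X × Δ¹` at a vertex `e` of `Δ¹`. -/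
noncomputable def cylEnd (X : SSet) (e : Δ[0] ⟶ Δ[1]) : X ⟶ X ⊗ Δ[1] :=
  lift (𝟙 X) (toPt X ≫ e)

/-- Simplicial homotopy between maps of simplicial sets. -/
def SHomotopic {X Z : SSet} (f g : X ⟶ Z) : Prop :=
  ∃ H : X ⊗ Δ[1] ⟶ Z, cylEnd X pt0 ≫ H = f ∧ cylEnd X pt1 ≫ H = g

/-- A (simplicial) homotopy equivalence of simplicial sets. -/
def SHomotopyEquiv {X Y : SSet} (f : X ⟶ Y) : Prop :=
  ∃ g : Y ⟶ X, SHomotopic (f ≫ g) (𝟙 X) ∧ SHomotopic (g ≫ f) (𝟙 Y)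

/-- A map `f : X ⟶ Y` over `A × B` is a bivariant equivalence if for every bifibration
`Z → A × B` the induced map `map_{A×B}(Y, Z) → map_{A×B}(X, Z)` is a homotopy
equivalence of Kan complexes. -/
def BivariantEquivalence {X Y : Over (A ⊗ B)} (f : X ⟶ Y) : Prop :=
  ∀ Z : Over (A ⊗ B), IsBifibration Z.hom → SHomotopyEquiv (mapOverPre f Z)

/-- The fiber of an object of `(sSet)/(A × B)` over a pair of vertices. -/
noncomputable def fiberAt (X : Over (A ⊗ B)) (a : Δ[0] ⟶ A) (b : Δ[0] ⟶ B) : SSet :=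
  pullback (sMap X) (lift a b)

/-- The map induced on fibers by a map over `A × B`. -/
noncomputable def fiberMap {X Y : Over (A ⊗ B)} (f : X ⟶ Y)
    (a : Δ[0] ⟶ A) (b : Δ[0] ⟶ B) : fiberAt X a b ⟶ fiberAt Y a b :=
  pullback.map _ _ _ _ f.left (𝟙 _) (𝟙 _) (by rw [Category.comp_id, sMap_w f]) (by simp)

/-- A retract in the category of arrows of `(sSet)/(A×B)`, expressed in terms of the
underlying maps together with the structure maps `sB`, `sY` of the codomains. -/
def RetractOfArrowOver (T : SSet) {A B X Y : SSet} (f : A ⟶ B) (g : X ⟶ Y)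
    (sB : B ⟶ T) (sY : Y ⟶ T) : Prop :=
  ∃ (i : A ⟶ X) (r : X ⟶ A) (i' : B ⟶ Y) (r' : Y ⟶ B),
    i ≫ r = 𝟙 A ∧ i' ≫ r' = 𝟙 B ∧ i ≫ g = f ≫ i' ∧ g ≫ r' = r ≫ f ∧
    i' ≫ sY = sB ∧ r' ≫ sB = sY

end Paper

/-!
Take `K = Λ[n, 0] ⊆ L = Δ[n]` and let `r : Δ[1] × Δ[n] → Δ[n]` be induced by the monotone map
`[1] × [n] → [n]` that is the second projection except that `(0, 1) ↦ 0`. It is the identity on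
`{1} × Δ[n]`, preserves `Δ[1] × Λ[n, 0]`, and maps `{0} × Δ[n]` into `Λ[n, 0]` because it misses
the vertex `1` there. Hence it exhibits `Λ[n, 0] ⊆ Δ[n]` as a retract of
`Δ[1] × Λ[n, 0] ∪ {0} × Δ[n] ⊆ Δ[1] × Δ[n]`, over `A × B` once `Δ[1] × Δ[n]` carries the
structure map `v ∘ r`. On `Δ[1] × {m}` the map `r` is constant unless `m = 1`, where it is the
edge `Δ^{0,1}`, whose image in `B` is degenerate by hypothesis.
-/

namespace Paper

open CategoryTheory Limits SSet MonoidalCategory CartesianMonoidalCategory Simplicial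

lemma comp_toPt {X Y : SSet} (f : X ⟶ Y) : f ≫ toPt Y = toPt X := stdSimplex.ext₀

lemma lift_toPt_comp_whiskerLeft {K L : SSet} (u : K ⟶ L) (e : Δ[0] ⟶ Δ[1]) :
    lift (toPt K ≫ e) (𝟙 K) ≫ (Δ[1] ◁ u) = u ≫ lift (toPt L ≫ e) (𝟙 L) := by
  ext1 <;> simp [← Category.assoc, comp_toPt]

lemma retractOfArrowOver_ι_pushoutProd {L T : SSet} (K : L.Subcomplex)
    (r : Δ[1] ⊗ L ⟶ L) (hr : lift (toPt L ≫ pt1) (𝟙 L) ≫ r = 𝟙 L)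
    (hrK : Subcomplex.range ((Δ[1] ◁ K.ι) ≫ r) ≤ K)
    (hr₀ : Subcomplex.range ((pt0 ▷ L) ≫ r) ≤ K) (s : L ⟶ T) :
    RetractOfArrowOver T K.ι (pushoutProd pt0 K.ι) s (r ≫ s) := by
  obtain ⟨rK, hrK_ι⟩ : ∃ rK, (Δ[1] ◁ K.ι) ≫ r = rK ≫ K.ι :=
    ⟨_, (Subcomplex.lift_ι _ hrK).symm⟩
  obtain ⟨r₀, hr₀_ι⟩ : ∃ r₀, (pt0 ▷ L) ≫ r = r₀ ≫ K.ι := ⟨_, (Subcomplex.lift_ι _ hr₀).symm⟩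
  have hrK₁ : lift (toPt K ≫ pt1) (𝟙 (K : SSet)) ≫ rK = 𝟙 (K : SSet) := by
    rw [← cancel_mono K.ι, Category.assoc, ← hrK_ι, ← Category.assoc,
      lift_toPt_comp_whiskerLeft, Category.assoc, hr, Category.comp_id, Category.id_comp]
  have hrK₀ : (pt0 ▷ K) ≫ rK = (Δ[0] ◁ K.ι) ≫ r₀ := by
    rw [← cancel_mono K.ι, Category.assoc, ← hrK_ι, Category.assoc, ← hr₀_ι,
      whisker_exchange_assoc]
  refine ⟨lift (toPt K ≫ pt1) (𝟙 (K : SSet)) ≫ pushout.inl _ _, pushout.desc rK r₀ hrK₀,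
    lift (toPt L ≫ pt1) (𝟙 L), r, ?_, hr, ?_, ?_,
    by rw [← Category.assoc, hr, Category.id_comp], rfl⟩
  · rw [Category.assoc, pushout.inl_desc, hrK₁]
  · rw [pushoutProd, Category.assoc, pushout.inl_desc, lift_toPt_comp_whiskerLeft]
  · apply pushout.hom_ext
    · rw [pushoutProd, pushout.inl_desc_assoc, pushout.inl_desc_assoc, hrK_ι]
    · rw [pushoutProd, pushout.inr_desc_assoc, pushout.inr_desc_assoc, hr₀_ι]

def prodStdSimplexMap {p q n : ℕ} (ρ : Fin (p + 1) × Fin (q + 1) →o Fin (n + 1)) :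
    Δ[p] ⊗ Δ[q] ⟶ Δ[n] where
  app _ := TypeCat.ofHom fun x => stdSimplex.objMk
    (ρ.comp ((stdSimplex.asOrderHom x.1).prod (stdSimplex.asOrderHom x.2)))

def hornRetraction (n : ℕ) : Fin 2 × Fin (n + 1) →o Fin (n + 1) where
  toFun e := if e = (0, 1) then 0 else e.2
  monotone' := by
    rintro ⟨a₁, a₂⟩ ⟨b₁, b₂⟩ ⟨h₁ : a₁ ≤ b₁, h₂ : a₂ ≤ b₂⟩
    dsimp only
    split_ifs with ha hb hb
    · exact le_rfl
    · exact Fin.zero_le _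
    · obtain ⟨rfl, rfl⟩ := Prod.mk.inj hb
      obtain rfl : a₁ = 0 := Fin.le_zero_iff.mp h₁
      have h := Fin.lt_def.mp (lt_of_le_of_ne h₂ fun h => ha (by rw [h]))
      rw [Fin.val_one'] at h
      rw [Fin.le_def, Fin.val_zero]
      have := Nat.mod_le 1 (n + 1)
      omega
    · exact h₂

section hornRetraction

variable {n : ℕ}

lemma hornRetraction_apply (e : Fin 2 × Fin (n + 1)) :
    hornRetraction n e = if e = (0, 1) then 0 else e.2 := rfl

lemma hornRetraction_one (k : Fin (n + 1)) : hornRetraction n (1, k) = k := by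
  simp [hornRetraction_apply]

lemma hornRetraction_zero_one : hornRetraction n (0, 1) = 0 := by
  simp [hornRetraction_apply]

lemma hornRetraction_zero_of_ne_one {k : Fin (n + 1)} (hk : k ≠ 1) :
    hornRetraction n (0, k) = k := by
  simp [hornRetraction_apply, hk]

lemma hornRetraction_zero_ne_one (hn : 1 ≤ n) (k : Fin (n + 1)) :
    hornRetraction n (0, k) ≠ 1 := by
  have : NeZero n := ⟨by omega⟩
  by_cases hk : k = 1
  · rw [hk, hornRetraction_zero_one]
    exact Fin.one_pos'.ne
  · rwa [hornRetraction_zero_of_ne_one hk]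

lemma hornRetraction_eq_zero_or (e : Fin 2 × Fin (n + 1)) :
    hornRetraction n e = 0 ∨ hornRetraction n e = e.2 := by
  rw [hornRetraction_apply]
  split_ifs <;> simp

end hornRetraction

def cylRetraction (n : ℕ) : Δ[1] ⊗ Δ[n] ⟶ Δ[n] := prodStdSimplexMap (hornRetraction n)

lemma lift_pt1_comp_cylRetraction (n : ℕ) :
    lift (toPt Δ[n] ≫ pt1) (𝟙 Δ[n]) ≫ cylRetraction n = 𝟙 Δ[n] := by
  apply SSet.yonedaEquiv.injective
  exact SSet.stdSimplex.ext _ _ fun j => hornRetraction_one j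

lemma range_whiskerLeft_horn_comp_cylRetraction_le (n : ℕ) :
    Subcomplex.range ((Δ[1] ◁ Λ[n, 0].ι) ≫ cylRetraction n) ≤ Λ[n, 0] := by
  rintro ⟨⟨d⟩⟩ _ ⟨x, rfl⟩
  obtain ⟨k, hk0, hk⟩ := (mem_horn_iff_notMem_range x.2.1 0).1 x.2.2
  refine (mem_horn_iff_notMem_range _ 0).2 ⟨k, hk0, ?_⟩
  rintro ⟨j, hj : hornRetraction n (x.1 j, x.2.1 j) = k⟩
  rcases hornRetraction_eq_zero_or (x.1 j, x.2.1 j) with h | h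
  · exact hk0 (hj.symm.trans h)
  · exact hk ⟨j, h.symm.trans hj⟩

lemma range_pt0_whiskerRight_comp_cylRetraction_le {n : ℕ} (hn : 1 ≤ n) :
    Subcomplex.range ((pt0 ▷ Δ[n]) ≫ cylRetraction n) ≤ Λ[n, 0] := by
  have : NeZero n := ⟨by omega⟩
  rintro ⟨⟨d⟩⟩ _ ⟨x, rfl⟩
  refine (mem_horn_iff_notMem_range _ 0).2 ⟨1, Fin.one_pos'.ne', ?_⟩
  rintro ⟨j, hj : hornRetraction n (0, x.2 j) = 1⟩
  exact hornRetraction_zero_ne_one hn _ hj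

lemma lift_toPt_comp_cylRetraction_eq_or {n : ℕ} (hn : 1 ≤ n) (w : Δ[0] ⟶ Δ[n]) :
    lift (𝟙 Δ[1]) (toPt Δ[1] ≫ w) ≫ cylRetraction n = toPt Δ[1] ≫ w ∨
      lift (𝟙 Δ[1]) (toPt Δ[1] ≫ w) ≫ cylRetraction n = edge01 n hn := by
  obtain ⟨x, rfl⟩ := SSet.yonedaEquiv.symm.surjective w
  rw [yonedaEquiv_symm_zero, comp_const]
  by_cases hx : x 0 = 1
  · right
    apply SSet.yonedaEquiv.injective
    rw [edge01, Equiv.apply_symm_apply]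
    refine SSet.stdSimplex.ext _ _ fun j => ?_
    fin_cases j
    · show hornRetraction n (0, x 0) = 0
      rw [hx, hornRetraction_zero_one]
    · show hornRetraction n (1, x 0) = ⟨1, _⟩
      rw [hornRetraction_one, hx]
      exact Fin.ext (by rw [Fin.val_one']; exact Nat.mod_eq_of_lt (by omega))
  · left
    apply SSet.yonedaEquiv.injective
    refine SSet.stdSimplex.ext _ _ fun j => ?_
    fin_cases j
    · exact hornRetraction_zero_of_ne_one hx
    · exact hornRetraction_one _

end Paper

open Paper CategoryTheory Limits SSet MonoidalCategory CartesianMonoidalCategory in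
/-- every horn `Λ[n,0] ⟶ Δ[n]` over `A × B` whose structure map is
degenerate on the edge `Δ^{0,1}` in the `B`-coordinate is a retract over `A × B` of a
map of the form `Δ¹ × K ∪ {0} × L → Δ¹ × L` whose structure map is degenerate on
`Δ¹ × {v}` in the `B`-coordinate for every vertex `v` of `L`. -/
theorem horn_retract_of_cylinder_inclusion (A B : SSet) (n : ℕ) (hn : 1 ≤ n)
    (v : Δ[n] ⟶ A ⊗ B)
    (hdeg : DegenerateEdge (edge01 n hn ≫ v ≫ snd A B)) :
    ∃ (K L : SSet) (u : K ⟶ L) (_ : Mono u) (σ : Δ[1] ⊗ L ⟶ A ⊗ B),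
      (∀ w : Δ[0] ⟶ L,
        DegenerateEdge (lift (𝟙 Δ[1]) (toPt Δ[1] ≫ w) ≫ σ ≫ snd A B)) ∧
      RetractOfArrowOver (A ⊗ B) (Λ[n, 0].ι) (pushoutProd pt0 u) v σ := by
  refine ⟨Λ[n, 0], Δ[n], Λ[n, 0].ι, inferInstance, cylRetraction n ≫ v, fun w => ?_,
    retractOfArrowOver_ι_pushoutProd _ _ (lift_pt1_comp_cylRetraction n)
      (range_whiskerLeft_horn_comp_cylRetraction_le n)
      (range_pt0_whiskerRight_comp_cylRetraction_le hn) v⟩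
  rw [Category.assoc, ← Category.assoc]
  rcases lift_toPt_comp_cylRetraction_eq_or hn w with h | h
  · exact ⟨w ≫ v ≫ snd A B, by rw [h, Category.assoc]⟩
  · rwa [h]
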